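/- Ramanujan's first transformation. For every complex number n and every complex x with |x| < 1, (1 − x²)^{−1/2} · Σ_{k=0}^{∞} (−n)_k (n)_k x^{2k} / ( (1/2)_k k! ) = Σ_{k=0}^{∞} (1/2 − n)_k (1/2 + n)_k x^{2k} / ( (1/2)_k k! ), where (1 − x²)^{−1/2} denotes the principal branch. -/

import Mathlib

/-!
With `z = x²` this is the case `a = -n`, `b = n`, `c = 1/2` of Euler's transformation
`(1 - z)^(a + b - c) ₂F₁(a, b; c; z) = ₂F₁(c - a, c - b; c; z)`. Expanding `(1 - z)^(a + b - c)`
by the binomial series and taking the Cauchy product of the two absolutely convergent series,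
the coefficient of `z^K` becomes a terminating Pfaff–Saalschütz sum, evaluated by creative
telescoping with a Wilf–Zeilberger certificate.
-/

noncomputable def poch (a : ℂ) (k : ℕ) : ℂ := ∏ i ∈ Finset.range k, (a + i)

open Finset Polynomial FormalMultilinearSeries
open scoped Nat

lemma poch_zero (a : ℂ) : poch a 0 = 1 := prod_range_zero _

lemma poch_succ (a : ℂ) (k : ℕ) : poch a (k + 1) = poch a k * (a + k) :=
  prod_range_succ _ _

lemma poch_succ' (a : ℂ) (k : ℕ) : poch a (k + 1) = a * poch (a + 1) k := by
  rw [poch, prod_range_succ', Nat.cast_zero, add_zero, mul_comm]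
  exact congrArg (a * ·) (prod_congr rfl fun i _ => by push_cast; ring)

lemma poch_add (a : ℂ) (k m : ℕ) : poch a (k + m) = poch a k * poch (a + k) m := by
  simp only [poch, prod_range_add, Nat.cast_add, add_assoc]

lemma poch_ne_zero {c : ℂ} (hc : ∀ k : ℕ, c + k ≠ 0) (n : ℕ) : poch c n ≠ 0 :=
  prod_ne_zero_iff.2 fun i _ => hc i

lemma poch_eq_ascPochhammer_eval (a : ℂ) (k : ℕ) : poch a k = (ascPochhammer ℂ k).eval a := by
  induction k with
  | zero => simp [poch]
  | succ k ih => rw [poch_succ, ih, ascPochhammer_succ_eval]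

theorem sum_range_eq_prod_mul_of_creative_telescoping {R : Type*} [CommRing R]
    {F G : ℕ → ℕ → R} {r : ℕ → R} (hF : ∀ K, F K (K + 1) = 0) (hG₀ : ∀ K, G K 0 = 0)
    (hG : ∀ K, G K (K + 2) = 0)
    (h : ∀ K, ∀ k ≤ K + 1, F (K + 1) k = r K * F K k + (G K (k + 1) - G K k)) (K : ℕ) :
    ∑ k ∈ range (K + 1), F K k = (∏ j ∈ range K, r j) * F 0 0 := by
  induction K with
  | zero => simp
  | succ K ih =>
    rw [sum_congr rfl fun k hk => h K k (Nat.lt_succ_iff.1 (mem_range.1 hk)), sum_add_distrib,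
      ← mul_sum, sum_range_sub, hG₀, hG, sum_range_succ, hF, ih, prod_range_succ]
    ring

section Saalschutz

variable (a b c : ℂ)

noncomputable def saalschutzTerm (K k : ℕ) : ℂ :=
  K.choose k * poch a k * poch b k * poch (c - a - b) (K - k) * poch (c + k) (K - k)

noncomputable def saalschutzCertificate (K k : ℕ) : ℂ :=
  -((K + 1).choose k * k / (K + 1)) * poch a k * poch b k * poch (c - a - b) (K + 1 - k) *
    poch (c + k - 1) (K + 1 - k)

lemma saalschutzTerm_succ_of_le {K k : ℕ} (hk : k ≤ K) :
    saalschutzTerm a b c (K + 1) k = (c - a + K) * (c - b + K) * saalschutzTerm a b c K k +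
      (saalschutzCertificate a b c K (k + 1) - saalschutzCertificate a b c K k) := by
  obtain ⟨m, rfl⟩ := Nat.exists_eq_add_of_le hk
  simp only [saalschutzTerm, saalschutzCertificate, Nat.cast_choose ℂ (by omega : k ≤ k + m + 1),
    Nat.cast_choose ℂ (by omega : k ≤ k + m), Nat.cast_choose ℂ (by omega : k + 1 ≤ k + m + 1),
    show k + m + 1 - k = m + 1 by omega, show k + m - k = m by omega,
    show k + m + 1 - (k + 1) = m by omega]
  rw [show c + ((k + 1 : ℕ) : ℂ) - 1 = c + k by push_cast; ring, poch_succ' (c + k - 1),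
    sub_add_cancel, poch_succ a, poch_succ b, poch_succ (c - a - b), poch_succ (c + k)]
  have hK : (k : ℂ) + m + 1 ≠ 0 := by norm_cast
  simp only [Nat.factorial_succ]
  push_cast
  field_simp
  ring

lemma saalschutzTerm_succ (K k : ℕ) (hk : k ≤ K + 1) :
    saalschutzTerm a b c (K + 1) k = (c - a + K) * (c - b + K) * saalschutzTerm a b c K k +
      (saalschutzCertificate a b c K (k + 1) - saalschutzCertificate a b c K k) := by
  rcases hk.lt_or_eq with hk | rfl
  · exact saalschutzTerm_succ_of_le a b c (Nat.lt_succ_iff.1 hk)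
  · have hK : (K : ℂ) + 1 ≠ 0 := by norm_cast
    simp [saalschutzTerm, saalschutzCertificate, poch_zero, Nat.choose_succ_self, hK]

theorem sum_saalschutzTerm (K : ℕ) :
    ∑ k ∈ range (K + 1), saalschutzTerm a b c K k = poch (c - a) K * poch (c - b) K := by
  rw [sum_range_eq_prod_mul_of_creative_telescoping (fun K => by simp [saalschutzTerm])
    (fun K => by simp [saalschutzCertificate]) (fun K => by simp [saalschutzCertificate])
    (saalschutzTerm_succ a b c)]
  simp [saalschutzTerm, poch, prod_mul_distrib]

end Saalschutz

noncomputable def binomialTerm (s z : ℂ) (n : ℕ) : ℂ := poch s n * z ^ n / n !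

noncomputable def hypergeometricTerm (a b c z : ℂ) (n : ℕ) : ℂ :=
  poch a n * poch b n * z ^ n / (poch c n * n !)

lemma mem_eball_zero_of_norm_lt_one {E : Type*} [SeminormedAddCommGroup E] {z : E}
    (hz : ‖z‖ < 1) {r : ENNReal} (hr : 1 ≤ r) : z ∈ Metric.eball (0 : E) r := by
  rw [mem_eball_zero_iff, ← ofReal_norm]
  exact lt_of_lt_of_le (ENNReal.ofReal_lt_one.2 hz) hr

lemma ringChoose_add_sub_one (s : ℂ) (n : ℕ) : Ring.choose (s + n - 1) n = poch s n / n ! := by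
  rw [Ring.choose_eq_smul, descPochhammer_smeval_eq_ascPochhammer, ascPochhammer_smeval_eq_eval,
    poch_eq_ascPochhammer_eval, smul_eq_mul, div_eq_inv_mul]
  ring_nf

lemma ofScalars_choose_apply_eq_binomialTerm (s z : ℂ) (n : ℕ) :
    ofScalars ℂ (fun n ↦ Ring.choose (s + n - 1) n) n (fun _ => z) = binomialTerm s z n := by
  rw [ofScalars_apply_eq, ringChoose_add_sub_one, smul_eq_mul, div_mul_eq_mul_div, binomialTerm]

lemma hasSum_binomialTerm {z : ℂ} (hz : ‖z‖ < 1) (s : ℂ) :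
    HasSum (binomialTerm s z) ((1 - z) ^ (-s)) := by
  have h := (Complex.one_div_one_sub_cpow_hasFPowerSeriesOnBall_zero s).hasSum
    (mem_eball_zero_of_norm_lt_one hz le_rfl)
  simp only [ofScalars_choose_apply_eq_binomialTerm, zero_add, one_div] at h
  rwa [Complex.cpow_neg]

lemma summable_norm_binomialTerm {z : ℂ} (hz : ‖z‖ < 1) (s : ℂ) :
    Summable (fun n => ‖binomialTerm s z n‖) := by
  have h := (Complex.one_div_one_sub_cpow_hasFPowerSeriesOnBall_zero s).r_le
  simpa only [ofScalars_choose_apply_eq_binomialTerm] using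
    summable_norm_apply _ (mem_eball_zero_of_norm_lt_one hz h)

lemma one_le_radius_ordinaryHypergeometricSeries {𝕂 𝔸 : Type*} [RCLike 𝕂]
    [NormedDivisionRing 𝔸] [NormedAlgebra 𝕂 𝔸] (a b c : 𝕂) :
    1 ≤ (ordinaryHypergeometricSeries 𝔸 a b c).radius := by
  by_cases habc : ∃ k : ℕ, (k : 𝕂) = -a ∨ (k : 𝕂) = -b ∨ (k : 𝕂) = -c
  · obtain ⟨k, h | h | h⟩ := habc
    · simp [show a = -k by simp [h], ordinaryHypergeometric_radius_top_of_neg_nat₁]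
    · simp [show b = -k by simp [h], ordinaryHypergeometric_radius_top_of_neg_nat₂]
    · simp [show c = -k by simp [h], ordinaryHypergeometric_radius_top_of_neg_nat₃]
  · push Not at habc
    rw [ordinaryHypergeometricSeries_radius_eq_one 𝔸 a b c habc]

-- When `c` is a nonpositive integer both sides carry the junk value `0⁻¹ = 0` alike.
lemma ordinaryHypergeometricSeries_apply_eq_hypergeometricTerm (a b c z : ℂ) (n : ℕ) :
    ordinaryHypergeometricSeries ℂ a b c n (fun _ => z) = hypergeometricTerm a b c z n := by
  rw [ordinaryHypergeometricSeries_apply_eq, hypergeometricTerm]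
  simp only [poch_eq_ascPochhammer_eval, smul_eq_mul]
  field_simp

lemma ordinaryHypergeometric_eq_tsum_hypergeometricTerm (a b c z : ℂ) :
    ₂F₁ a b c z = ∑' n, hypergeometricTerm a b c z n :=
  tsum_congr (ordinaryHypergeometricSeries_apply_eq_hypergeometricTerm a b c z)

lemma summable_norm_hypergeometricTerm {z : ℂ} (hz : ‖z‖ < 1) (a b c : ℂ) :
    Summable (fun n => ‖hypergeometricTerm a b c z n‖) := by
  simpa only [ordinaryHypergeometricSeries_apply_eq_hypergeometricTerm] using summable_norm_apply _
    (mem_eball_zero_of_norm_lt_one hz (one_le_radius_ordinaryHypergeometricSeries (𝔸 := ℂ) a b c))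

lemma hypergeometricTerm_mul_binomialTerm {a b c : ℂ} (hc : ∀ k : ℕ, c + k ≠ 0) (z : ℂ)
    {K k : ℕ} (hk : k ≤ K) :
    hypergeometricTerm a b c z k * binomialTerm (c - a - b) z (K - k)
      = saalschutzTerm a b c K k * (z ^ K / (poch c K * K !)) := by
  obtain ⟨m, rfl⟩ := Nat.exists_eq_add_of_le hk
  have hck := poch_ne_zero hc k
  have hckm : poch (c + k) m ≠ 0 := poch_ne_zero (fun j => by simpa [add_assoc] using hc (k + j)) m
  have hfac : ((k + m)! : ℂ) ≠ 0 := Nat.cast_ne_zero.2 (Nat.factorial_ne_zero _)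
  simp only [hypergeometricTerm, binomialTerm, saalschutzTerm, Nat.add_sub_cancel_left,
    Nat.cast_add_choose, poch_add, pow_add]
  field_simp

lemma sum_antidiagonal_hypergeometricTerm_mul_binomialTerm {a b c : ℂ}
    (hc : ∀ k : ℕ, c + k ≠ 0) (z : ℂ) (K : ℕ) :
    ∑ ij ∈ antidiagonal K, hypergeometricTerm a b c z ij.1 * binomialTerm (c - a - b) z ij.2
      = hypergeometricTerm (c - a) (c - b) c z K := by
  rw [Nat.sum_antidiagonal_eq_sum_range_succ
      (fun i j => hypergeometricTerm a b c z i * binomialTerm (c - a - b) z j),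
    sum_congr rfl fun k hk => hypergeometricTerm_mul_binomialTerm hc z
      (Nat.lt_succ_iff.1 (mem_range.1 hk)), ← sum_mul, sum_saalschutzTerm, hypergeometricTerm,
    mul_div_assoc]

theorem one_sub_cpow_mul_ordinaryHypergeometric {a b c z : ℂ} (hc : ∀ k : ℕ, c + k ≠ 0)
    (hz : ‖z‖ < 1) : (1 - z) ^ (a + b - c) * ₂F₁ a b c z = ₂F₁ (c - a) (c - b) c z := by
  rw [ordinaryHypergeometric_eq_tsum_hypergeometricTerm,
    ordinaryHypergeometric_eq_tsum_hypergeometricTerm, mul_comm,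
    show a + b - c = -(c - a - b) by ring, ← (hasSum_binomialTerm hz _).tsum_eq,
    tsum_mul_tsum_eq_tsum_sum_antidiagonal_of_summable_norm
      (summable_norm_hypergeometricTerm hz a b c) (summable_norm_binomialTerm hz _)]
  exact tsum_congr (sum_antidiagonal_hypergeometricTerm_mul_binomialTerm hc z)

/-- **Ramanujan's first transformation.** -/
theorem ramanujan_first_transformation (n x : ℂ) (hx : ‖x‖ < 1) :
    (1 - x ^ 2) ^ (-(1 / 2) : ℂ) *
      ∑' k : ℕ, poch (-n) k * poch n k * x ^ (2 * k) /
        (poch (1 / 2) k * (Nat.factorial k : ℂ))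
    = ∑' k : ℕ, poch (1 / 2 - n) k * poch (1 / 2 + n) k * x ^ (2 * k) /
        (poch (1 / 2) k * (Nat.factorial k : ℂ)) := by
  have hz : ‖x ^ 2‖ < 1 := by rw [norm_pow]; exact pow_lt_one₀ (norm_nonneg x) hx two_ne_zero
  have hc : ∀ k : ℕ, (1 / 2 : ℂ) + k ≠ 0 := fun k h => by
    have := congrArg Complex.re h
    norm_num at this
    linarith
  have h := one_sub_cpow_mul_ordinaryHypergeometric (a := -n) (b := n) hc hz
  simp only [ordinaryHypergeometric_eq_tsum_hypergeometricTerm, hypergeometricTerm,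
    ← pow_mul] at h
  rw [show -n + n - 1 / 2 = -(1 / 2 : ℂ) by ring, sub_neg_eq_add] at h
  rw [h]
  exact tsum_congr fun k => by ring
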